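/- Fix integers C and k with 1 ≤ k and k + 1 ≤ C. There exist an initial matrix F^{(0)} ∈ ℝ^{C×C} and a step size η > 0 such that the gradient-descent sequence defined by F^{(m+1)} = F^{(m)} − η·∇R_hard(F^{(m)}) satisfies F^{(m)}_{i,i} → +∞ as m → ∞ for every i, and F^{(m)}_{i,j} → −∞ as m → ∞ for every pair i ≠ j. -/

import Mathlib

/-!
The risk is invariant under a simultaneous permutation of rows and columns, so at a matrix with
constant diagonal `x` and constant off-diagonal `y` the gradient has the same shape. Each softmax
sums to one, so every row of the gradient sums to zero and the off-diagonal gradient is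
`-1 / (C - 1)` times the diagonal one: gradient descent from `0` stays on the line
`y = -x / (C - 1)`. The diagonal gradient is an explicit function of `q = exp (y - x)`, negative
and of size at least a constant times `q` when `q ≤ 1`. Thus `x` grows by at least
`c * exp (-C x / (C - 1))` per step, which cannot stay bounded, so `x → ∞` and `y → -∞`.
-/

open Real Filter

/-- softmax of a vector `v ∈ ℝ^d`: `softmax v j = exp (v j) / ∑ m, exp (v m)`. -/
noncomputable def softmax {d : ℕ} (v : Fin d → ℝ) : Fin d → ℝ :=
  fun j => Real.exp (v j) / ∑ m, Real.exp (v m)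

/-- The hard OKO risk. -/
noncomputable def Rhard {C : ℕ} (k : ℕ) (F : Fin C → Fin C → ℝ) : ℝ :=
  -∑ i : Fin C,
    ∑ S ∈ Finset.univ.filter (fun S : Finset (Fin C) => S.card = k ∧ i ∉ S),
      Real.log (softmax (fun j => 2 * F i j + ∑ ℓ ∈ S, F ℓ j) i)

/-- The `(i,j)` entry of the Euclidean gradient of `Rhard`, i.e. the partial derivative
of `Rhard` with respect to the entry `F_{i,j}`, evaluated at `F`. -/
noncomputable def RhardGrad {C : ℕ} (k : ℕ) (i j : Fin C)
    (F : Fin C → Fin C → ℝ) : ℝ :=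
  deriv (fun t : ℝ => Rhard k (fun a b => if a = i ∧ b = j then t else F a b)) (F i j)

open Finset

section Softmax

variable {d : ℕ}

lemma sum_softmax [Nonempty (Fin d)] (v : Fin d → ℝ) : ∑ j, softmax v j = 1 := by
  simp only [softmax, ← sum_div]
  exact div_self (sum_pos (fun m _ => exp_pos (v m)) univ_nonempty).ne'

lemma softmax_comp_perm (σ : Equiv.Perm (Fin d)) (v : Fin d → ℝ) (i : Fin d) :
    softmax (v ∘ σ) i = softmax v (σ i) := by
  simp only [softmax, Function.comp_apply, Equiv.sum_comp σ (fun m => exp (v m))]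

lemma hasDerivAt_log_softmax {g : ℝ → Fin d → ℝ} {g' : Fin d → ℝ} {t₀ : ℝ}
    (hg : ∀ m, HasDerivAt (fun t => g t m) (g' m) t₀) (i : Fin d) :
    HasDerivAt (fun t => log (softmax (g t) i))
      (g' i - ∑ m, softmax (g t₀) m * g' m) t₀ := by
  have hZ : ∀ t, 0 < ∑ m, exp (g t m) :=
    fun t => sum_pos (fun m _ => exp_pos _) ⟨i, mem_univ i⟩
  have hlog : (fun t => log (softmax (g t) i)) = fun t => g t i - log (∑ m, exp (g t m)) := by
    funext t
    rw [softmax, log_div (exp_ne_zero _) (hZ t).ne', log_exp]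
  have hsum : HasDerivAt (fun t => ∑ m, exp (g t m)) (∑ m, exp (g t₀ m) * g' m) t₀ :=
    HasDerivAt.fun_sum fun m _ => (hg m).exp
  rw [hlog]
  refine ((hg i).sub (hsum.log (hZ t₀).ne')).congr_deriv ?_
  rw [sum_div]
  simp only [softmax, div_mul_eq_mul_div]

lemma softmax_eq_div_sum {v w : Fin d → ℝ} {a : ℝ} (ha : a ≠ 0)
    (h : ∀ m, exp (v m) = a * w m) (m : Fin d) : softmax v m = w m / ∑ m', w m' := by
  simp only [softmax, h, ← mul_sum, mul_div_mul_left _ _ ha]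

end Softmax

section Gradient

variable {C : ℕ}

/-- The family `𝕐_i` of the paper. -/
def avoidingSets (C k : ℕ) (i : Fin C) : Finset (Finset (Fin C)) :=
  univ.filter fun S => S.card = k ∧ i ∉ S

def okoLogits (F : Fin C → Fin C → ℝ) (i : Fin C) (S : Finset (Fin C)) : Fin C → ℝ :=
  fun j => 2 * F i j + ∑ ℓ ∈ S, F ℓ j

lemma Rhard_eq_sum (k : ℕ) (F : Fin C → Fin C → ℝ) :
    Rhard k F = -∑ i, ∑ S ∈ avoidingSets C k i, log (softmax (okoLogits F i S) i) :=
  rfl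

/-- The coefficient of the row `F_i` in `okoLogits F i' S`. -/
def okoWeight (i i' : Fin C) (S : Finset (Fin C)) : ℝ :=
  2 * (if i' = i then 1 else 0) + if i ∈ S then 1 else 0

lemma okoLogits_update (F : Fin C → Fin C → ℝ) (i j i' : Fin C) (S : Finset (Fin C))
    (t : ℝ) :
    okoLogits (fun a b => if a = i ∧ b = j then t else F a b) i' S =
      fun m => okoLogits F i' S m + (t - F i j) * if m = j then okoWeight i i' S else 0 := by
  funext m
  have hentry : ∀ a, (if a = i ∧ m = j then t else F a m) =
      F a m + (t - F i j) * if a = i ∧ m = j then 1 else 0 := by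
    intro a
    split_ifs with h
    · rw [h.1, h.2]; ring
    · ring
  simp only [okoLogits, hentry, sum_add_distrib, ← mul_sum]
  by_cases hm : m = j
  · by_cases hi' : i' = i <;> by_cases hi : i ∈ S <;> simp [hm, hi, hi', okoWeight] <;> ring
  · simp [hm]

theorem RhardGrad_eq_sum (k : ℕ) (i j : Fin C) (F : Fin C → Fin C → ℝ) :
    RhardGrad k i j F = ∑ i', ∑ S ∈ avoidingSets C k i',
      okoWeight i i' S * (softmax (okoLogits F i' S) j - if j = i' then 1 else 0) := by
  have hterm : ∀ i' S, HasDerivAt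
      (fun t => log (softmax (okoLogits (fun a b => if a = i ∧ b = j then t else F a b) i' S) i'))
      (-(okoWeight i i' S * (softmax (okoLogits F i' S) j - if j = i' then 1 else 0))) (F i j) := by
    intro i' S
    simp_rw [okoLogits_update]
    have hlin : ∀ m, HasDerivAt
        (fun t => okoLogits F i' S m + (t - F i j) * if m = j then okoWeight i i' S else 0)
        (if m = j then okoWeight i i' S else 0) (F i j) := fun m => by
      simpa using (((hasDerivAt_id (F i j)).sub_const (F i j)).mul_const
        (if m = j then okoWeight i i' S else 0)).const_add (okoLogits F i' S m)
    refine (hasDerivAt_log_softmax hlin i').congr_deriv ?_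
    simp only [sub_self, zero_mul, ite_self, add_zero, mul_ite, mul_zero, sum_ite_eq',
      mem_univ, if_true, eq_comm (a := j)]
    split_ifs <;> ring
  rw [RhardGrad]
  refine (HasDerivAt.fun_sum fun i' _ =>
    HasDerivAt.fun_sum fun S _ => hterm i' S).neg.deriv.trans ?_
  simp only [sum_neg_distrib, neg_neg]
  rfl

end Gradient

section Symmetry

variable {C : ℕ}

theorem sum_RhardGrad_eq_zero (k : ℕ) (i : Fin C) (F : Fin C → Fin C → ℝ) :
    ∑ j, RhardGrad k i j F = 0 := by
  have : Nonempty (Fin C) := ⟨i⟩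
  simp_rw [RhardGrad_eq_sum]
  rw [sum_comm]
  refine sum_eq_zero fun i' _ => ?_
  rw [sum_comm]
  refine sum_eq_zero fun S _ => ?_
  rw [← mul_sum, sum_sub_distrib, sum_softmax, sum_ite_eq' univ i',
    if_pos (mem_univ i'), sub_self, mul_zero]

lemma okoLogits_perm (σ : Equiv.Perm (Fin C)) (F : Fin C → Fin C → ℝ) (i : Fin C)
    (S : Finset (Fin C)) :
    okoLogits (fun a b => F (σ a) (σ b)) i S =
      okoLogits F (σ i) (S.map σ.toEmbedding) ∘ σ := by
  funext m
  simp [okoLogits, sum_map]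

lemma map_perm_mem_avoidingSets {k : ℕ} (σ : Equiv.Perm (Fin C)) {i : Fin C}
    {S : Finset (Fin C)} (hS : S ∈ avoidingSets C k i) :
    S.map σ.toEmbedding ∈ avoidingSets C k (σ i) := by
  simpa [avoidingSets] using hS

theorem Rhard_perm (k : ℕ) (σ : Equiv.Perm (Fin C)) (F : Fin C → Fin C → ℝ) :
    Rhard k (fun a b => F (σ a) (σ b)) = Rhard k F := by
  simp only [Rhard_eq_sum, okoLogits_perm, softmax_comp_perm]
  congr 1
  rw [← Equiv.sum_comp σ fun i =>
    ∑ S ∈ avoidingSets C k i, log (softmax (okoLogits F i S) i)]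
  refine sum_congr rfl fun i _ => ?_
  refine sum_nbij' (fun S => S.map σ.toEmbedding) (fun T => T.map σ.symm.toEmbedding)
    (fun S hS => map_perm_mem_avoidingSets σ hS) (fun T hT => ?_) (fun S _ => ?_) (fun T _ => ?_)
    (fun S _ => rfl)
  · simpa using map_perm_mem_avoidingSets σ.symm hT
  · simp [Finset.map_map]
  · simp [Finset.map_map]

theorem RhardGrad_perm (k : ℕ) (σ : Equiv.Perm (Fin C)) (i j : Fin C)
    (F : Fin C → Fin C → ℝ) :
    RhardGrad k i j (fun a b => F (σ a) (σ b)) = RhardGrad k (σ i) (σ j) F := by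
  simp only [RhardGrad]
  congr 1
  funext t
  rw [← Rhard_perm k σ (fun a b => if a = σ i ∧ b = σ j then t else F a b)]
  simp only [σ.injective.eq_iff]

end Symmetry

section Counting

lemma card_filter_mem_powersetCard {α : Type*} [DecidableEq α] {s : Finset α} {a : α}
    (ha : a ∈ s) (n : ℕ) :
    ((s.powersetCard (n + 1)).filter (a ∈ ·)).card = (s.card - 1).choose n := by
  rw [← card_erase_of_mem ha, ← card_powersetCard]
  refine card_bij' (fun S _ => S.erase a) (fun T _ => insert a T) (fun S hS => ?_) (fun T hT => ?_)
    (fun S hS => ?_) (fun T hT => ?_)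
  · rw [mem_filter, mem_powersetCard] at hS
    rw [mem_powersetCard, card_erase_of_mem hS.2, hS.1.2, Nat.add_sub_cancel]
    exact ⟨erase_subset_erase a hS.1.1, rfl⟩
  · rw [mem_powersetCard] at hT
    have haT : a ∉ T := fun h => (mem_erase.mp (hT.1 h)).1 rfl
    rw [mem_filter, mem_powersetCard, card_insert_of_notMem haT, hT.2]
    exact ⟨⟨insert_subset ha (hT.1.trans (erase_subset a s)), rfl⟩, mem_insert_self a T⟩
  · exact insert_erase (mem_filter.mp hS).2
  · exact erase_insert fun h => (mem_erase.mp ((mem_powersetCard.mp hT).1 h)).1 rfl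

variable {C k : ℕ}

lemma avoidingSets_eq_powersetCard (i : Fin C) :
    avoidingSets C k i = (univ.erase i).powersetCard k := by
  ext S
  simp [avoidingSets, mem_powersetCard, subset_erase, and_comm]

lemma card_avoidingSets (i : Fin C) : (avoidingSets C k i).card = (C - 1).choose k := by
  simp [avoidingSets_eq_powersetCard, card_powersetCard]

lemma card_filter_mem_avoidingSets (hk : 1 ≤ k) {i i' : Fin C} (hi : i ≠ i') :
    ((avoidingSets C k i').filter (i ∈ ·)).card = (C - 2).choose (k - 1) := by
  obtain ⟨n, rfl⟩ := Nat.exists_eq_add_of_le' hk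
  rw [avoidingSets_eq_powersetCard,
    card_filter_mem_powersetCard (mem_erase.mpr ⟨hi, mem_univ i⟩),
    card_erase_of_mem (mem_univ i'), card_univ, Fintype.card_fin, Nat.add_sub_cancel]
  rfl

end Counting

section DiagOffDiag

variable {C k : ℕ}

def diagOffDiag (C : ℕ) (x y : ℝ) : Fin C → Fin C → ℝ :=
  fun a b => if a = b then x else y

lemma diagOffDiag_perm (σ : Equiv.Perm (Fin C)) (x y : ℝ) :
    (fun a b => diagOffDiag C x y (σ a) (σ b)) = diagOffDiag C x y := by
  funext a b
  simp [diagOffDiag, σ.injective.eq_iff]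

lemma RhardGrad_diagOffDiag_congr_right (x y : ℝ) {i j j' : Fin C} (hj : i ≠ j)
    (hj' : i ≠ j') :
    RhardGrad k i j (diagOffDiag C x y) = RhardGrad k i j' (diagOffDiag C x y) := by
  have h := RhardGrad_perm k (Equiv.swap j j') i j (diagOffDiag C x y)
  rwa [diagOffDiag_perm, Equiv.swap_apply_left, Equiv.swap_apply_of_ne_of_ne hj hj'] at h

theorem RhardGrad_diagOffDiag_of_ne (x y : ℝ) {i j : Fin C} (hij : i ≠ j) :
    RhardGrad k i j (diagOffDiag C x y) = -RhardGrad k i i (diagOffDiag C x y) / (C - 1) := by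
  have hC : 1 ≤ C := Fin.pos i
  have hrest : ∑ j' ∈ ({i}ᶜ : Finset (Fin C)), RhardGrad k i j' (diagOffDiag C x y) =
      (C - 1) * RhardGrad k i j (diagOffDiag C x y) := by
    rw [sum_congr rfl fun j' hj' => RhardGrad_diagOffDiag_congr_right x y
      (Ne.symm fun h => mem_compl.mp hj' (mem_singleton.mpr h)) hij, sum_const, card_compl,
      card_singleton, Fintype.card_fin, nsmul_eq_mul, Nat.cast_sub hC, Nat.cast_one]
  have hC1 : (C : ℝ) - 1 ≠ 0 := by
    have : 1 < C := by simpa using Fintype.one_lt_card_iff.mpr ⟨i, j, hij⟩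
    rw [sub_ne_zero]; exact_mod_cast this.ne'
  have hrow := sum_RhardGrad_eq_zero k i (diagOffDiag C x y)
  rw [Fintype.sum_eq_add_sum_compl i, hrest] at hrow
  field_simp
  linarith

lemma okoLogits_diagOffDiag (x y : ℝ) {i : Fin C} {S : Finset (Fin C)}
    (hS : S ∈ avoidingSets C k i) (m : Fin C) :
    okoLogits (diagOffDiag C x y) i S m =
      2 * x + k * y + if m = i then 0 else if m ∈ S then y - x else 2 * (y - x) := by
  simp only [avoidingSets, mem_filter, mem_univ, true_and] at hS
  have hentry : ∀ ℓ, diagOffDiag C x y ℓ m = y + if ℓ = m then x - y else 0 := fun ℓ => by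
    unfold diagOffDiag; split_ifs <;> ring
  simp only [okoLogits, hentry, sum_add_distrib, sum_const, hS.1, nsmul_eq_mul, sum_ite_eq']
  by_cases hmi : m = i
  · subst hmi; simp [hS.2]
  · by_cases hmS : m ∈ S <;> simp [hmi, Ne.symm hmi, hmS] <;> ring

/-- The softmax normaliser of `okoLogits (diagOffDiag C x y) i S`, scaled so that the
entry `i` has weight `1`; here `q = exp (y - x)`. -/
noncomputable def okoPartition (C k : ℕ) (q : ℝ) : ℝ :=
  1 + k * q + (C - 1 - k) * q ^ 2

lemma sub_one_sub_nonneg (hkC : k + 1 ≤ C) : (0 : ℝ) ≤ C - 1 - k := by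
  rw [sub_sub, sub_nonneg]; exact_mod_cast (by omega : 1 + k ≤ C)

lemma okoPartition_pos (hkC : k + 1 ≤ C) {q : ℝ} (hq : 0 ≤ q) : 0 < okoPartition C k q := by
  have := sub_one_sub_nonneg hkC
  unfold okoPartition; positivity

lemma softmax_okoLogits_diagOffDiag (x y : ℝ) {i : Fin C} {S : Finset (Fin C)}
    (hS : S ∈ avoidingSets C k i) (m : Fin C) :
    softmax (okoLogits (diagOffDiag C x y) i S) m =
      (if m = i then 1 else if m ∈ S then exp (y - x) else exp (y - x) ^ 2) /
        okoPartition C k (exp (y - x)) := by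
  set q := exp (y - x)
  rw [softmax_eq_div_sum (w := fun m => if m = i then 1 else if m ∈ S then q else q ^ 2)
    (exp_ne_zero (2 * x + k * y)) fun m => ?_]
  · simp only [avoidingSets, mem_filter, mem_univ, true_and] at hS
    congr 1
    have hw : ∀ m', (if m' = i then 1 else if m' ∈ S then q else q ^ 2) =
        q ^ 2 + (if i = m' then 1 - q ^ 2 else 0) + if m' ∈ S then q - q ^ 2 else 0 := by
      intro m'
      by_cases hm' : m' = i
      · subst hm'; simp [hS.2]
      · by_cases hm'S : m' ∈ S <;> simp [hm', Ne.symm hm', hm'S]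
    simp only [hw, sum_add_distrib, sum_const, card_univ, Fintype.card_fin, nsmul_eq_mul,
      sum_ite_eq, mem_univ, if_true, sum_ite_mem, univ_inter, hS.1, okoPartition]
    ring
  · rw [okoLogits_diagOffDiag x y hS, exp_add]
    congr 1
    split_ifs
    · exact exp_zero
    · rfl
    · rw [sq, ← exp_add, two_mul]

noncomputable def diagGrad (C k : ℕ) (q : ℝ) : ℝ :=
  -((C - 1).choose k : ℝ) * (k * q + 2 * (C - 1 - k) * q ^ 2) / okoPartition C k q

lemma sub_one_mul_choose_sub_two (hk : 1 ≤ k) (hkC : k + 1 ≤ C) :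
    ((C - 1 : ℕ) : ℝ) * (C - 2).choose (k - 1) = k * (C - 1).choose k := by
  have h := Nat.add_one_mul_choose_eq (C - 2) (k - 1)
  rw [show C - 2 + 1 = C - 1 by omega, show k - 1 + 1 = k by omega] at h
  exact_mod_cast h.trans (Nat.mul_comm _ _)

theorem RhardGrad_diagOffDiag_self (hk : 1 ≤ k) (hkC : k + 1 ≤ C) (x y : ℝ) (i : Fin C) :
    RhardGrad k i i (diagOffDiag C x y) = diagGrad C k (exp (y - x)) := by
  have hZ : 0 < okoPartition C k (exp (y - x)) := okoPartition_pos hkC (exp_pos _).le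
  have hself : ∑ S ∈ avoidingSets C k i, okoWeight i i S *
      (softmax (okoLogits (diagOffDiag C x y) i S) i - if i = i then 1 else 0) =
      (C - 1).choose k * (2 * (1 / okoPartition C k (exp (y - x)) - 1)) := by
    rw [sum_congr rfl fun S hS => ?_, sum_const, card_avoidingSets, nsmul_eq_mul]
    rw [softmax_okoLogits_diagOffDiag x y hS]
    simp only [avoidingSets, mem_filter, mem_univ, true_and] at hS
    simp [okoWeight, hS.2]
  have hother : ∀ i' ∈ ({i}ᶜ : Finset (Fin C)),
      ∑ S ∈ avoidingSets C k i', okoWeight i i' S *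
      (softmax (okoLogits (diagOffDiag C x y) i' S) i - if i = i' then 1 else 0) =
      (C - 2).choose (k - 1) * (exp (y - x) / okoPartition C k (exp (y - x))) := by
    intro i' hi'
    have hne : i ≠ i' := fun h => mem_compl.mp hi' (mem_singleton.mpr h.symm)
    rw [sum_congr rfl fun S hS =>
      (?_ : _ = if i ∈ S then exp (y - x) / okoPartition C k (exp (y - x)) else 0),
      ← sum_filter, sum_const, card_filter_mem_avoidingSets hk hne, nsmul_eq_mul]
    rw [softmax_okoLogits_diagOffDiag x y hS]
    by_cases hiS : i ∈ S <;> simp [okoWeight, hne, Ne.symm hne, hiS]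
  rw [RhardGrad_eq_sum, Fintype.sum_eq_add_sum_compl i, hself, sum_congr rfl hother, sum_const,
    card_compl, card_singleton, Fintype.card_fin, nsmul_eq_mul, diagGrad]
  have hid := sub_one_mul_choose_sub_two hk hkC
  field_simp
  unfold okoPartition
  linear_combination (exp (y - x)) * hid

lemma neg_diagGrad_ge (hkC : k + 1 ≤ C) {q : ℝ} (hq0 : 0 ≤ q) (hq1 : q ≤ 1) :
    (C - 1).choose k * k * q / C ≤ -diagGrad C k q := by
  have hr := sub_one_sub_nonneg hkC
  have hZ := okoPartition_pos hkC hq0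
  have hZC : okoPartition C k q ≤ C := by
    unfold okoPartition
    nlinarith [mul_le_mul_of_nonneg_left (pow_le_one₀ hq0 hq1 : q ^ 2 ≤ 1) hr]
  calc ((C - 1).choose k : ℝ) * k * q / C ≤ (C - 1).choose k * k * q / okoPartition C k q :=
        div_le_div_of_nonneg_left (by positivity) hZ hZC
    _ ≤ (C - 1).choose k * (k * q + 2 * (C - 1 - k) * q ^ 2) / okoPartition C k q := by
        rw [mul_assoc]; gcongr; nlinarith [sq_nonneg q]
    _ = -diagGrad C k q := by unfold diagGrad; ring

end DiagOffDiag

theorem tendsto_atTop_of_antitone_le_sub {x : ℕ → ℝ} {φ : ℝ → ℝ} (hφ : Antitone φ)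
    (hpos : ∀ t, 0 < φ t) (hx : ∀ m, φ (x m) ≤ x (m + 1) - x m) :
    Tendsto x atTop atTop := by
  have hmono : Monotone x := monotone_nat_of_le_succ fun m => by linarith [hx m, hpos (x m)]
  refine tendsto_atTop_atTop_of_monotone' hmono ?_
  rintro ⟨B, hB⟩
  have hB' : ∀ m, x m ≤ B := fun m => hB ⟨m, rfl⟩
  have hlin : ∀ m : ℕ, x 0 + m * φ B ≤ x m := by
    intro m
    induction m with
    | zero => simp
    | succ m ih => push_cast; linarith [hx m, hφ (hB' m)]
  obtain ⟨m, hm⟩ := exists_nat_gt ((B - x 0) / φ B)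
  rw [div_lt_iff₀ (hpos B)] at hm
  linarith [hlin m, hB' m]

section Descent

variable {C k : ℕ}

theorem diagOffDiag_sub_RhardGrad (hk : 1 ≤ k) (hkC : k + 1 ≤ C) (x y : ℝ) (i j : Fin C) :
    diagOffDiag C x y i j - RhardGrad k i j (diagOffDiag C x y) =
      diagOffDiag C (x - diagGrad C k (exp (y - x))) (y + diagGrad C k (exp (y - x)) / (C - 1))
        i j := by
  by_cases hij : i = j
  · subst hij
    simp [diagOffDiag, RhardGrad_diagOffDiag_self hk hkC]
  · rw [RhardGrad_diagOffDiag_of_ne x y hij, RhardGrad_diagOffDiag_self hk hkC]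
    simp only [diagOffDiag, if_neg hij]
    ring

/-- Gradient descent with unit step from `0` stays of the form
`diagOffDiag C x (-x / (C - 1))`; this is its diagonal entry. -/
noncomputable def okoDiagSeq (C k : ℕ) : ℕ → ℝ
  | 0 => 0
  | m + 1 => okoDiagSeq C k m -
      diagGrad C k (exp (-okoDiagSeq C k m / (C - 1) - okoDiagSeq C k m))

theorem tendsto_okoDiagSeq (hk : 1 ≤ k) (hkC : k + 1 ≤ C) :
    Tendsto (okoDiagSeq C k) atTop atTop := by
  have hC : (0 : ℝ) < C - 1 := by
    rw [sub_pos]; exact_mod_cast (by omega : 1 < C)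
  set φ : ℝ → ℝ := fun t => (C - 1).choose k * k * exp (-t / (C - 1) - t) / C
  have hφ : Antitone φ := fun s t hst => by
    have : (0 : ℝ) ≤ (C - 1).choose k * k := by positivity
    unfold φ; gcongr
  have hpos : ∀ t, 0 < φ t := fun t => by
    have : 0 < (C - 1).choose k := Nat.choose_pos (by omega)
    have : 0 < k := hk
    have : 0 < C := by omega
    unfold φ; positivity
  have hstep : ∀ m, 0 ≤ okoDiagSeq C k m →
      φ (okoDiagSeq C k m) ≤ okoDiagSeq C k (m + 1) - okoDiagSeq C k m := fun m hm => by
    rw [okoDiagSeq, sub_sub_cancel_left]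
    refine neg_diagGrad_ge hkC (exp_pos _).le (exp_le_one_iff.mpr ?_)
    have : 0 ≤ okoDiagSeq C k m / (C - 1) := div_nonneg hm hC.le
    linarith [neg_div (C - 1 : ℝ) (okoDiagSeq C k m)]
  have hnonneg : ∀ m, 0 ≤ okoDiagSeq C k m := fun m => by
    induction m with
    | zero => rfl
    | succ m ih => linarith [hstep m ih, hpos (okoDiagSeq C k m)]
  exact tendsto_atTop_of_antitone_le_sub hφ hpos fun m => hstep m (hnonneg m)

end Descent

/-- There exist an initialization `F⁰` and step size `η > 0` such that fixed-step
gradient descent on the hard OKO risk sends every diagonal entry to `+∞` and every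
off-diagonal entry to `−∞`. -/
theorem Rhard_gradient_descent_diverges {C k : ℕ} (hk : 1 ≤ k) (hkC : k + 1 ≤ C) :
    ∃ (F0 : Fin C → Fin C → ℝ) (η : ℝ), 0 < η ∧
      ∃ Fseq : ℕ → Fin C → Fin C → ℝ,
        Fseq 0 = F0
        ∧ (∀ m (i j : Fin C),
            Fseq (m + 1) i j = Fseq m i j - η * RhardGrad k i j (Fseq m))
        ∧ (∀ i : Fin C, Tendsto (fun m => Fseq m i i) atTop atTop)
        ∧ (∀ i j : Fin C, i ≠ j → Tendsto (fun m => Fseq m i j) atTop atBot) := by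
  have hC : (0 : ℝ) < C - 1 := by
    rw [sub_pos]; exact_mod_cast (by omega : 1 < C)
  have hdiag := tendsto_okoDiagSeq hk hkC
  refine ⟨_, 1, one_pos,
    fun m => diagOffDiag C (okoDiagSeq C k m) (-okoDiagSeq C k m / (C - 1)), rfl, ?_, ?_, ?_⟩
  · intro m i j
    rw [one_mul, diagOffDiag_sub_RhardGrad hk hkC]
    simp only [okoDiagSeq]
    congr 1
    ring
  · intro i
    simpa [diagOffDiag] using hdiag
  · intro i j hij
    simp only [diagOffDiag, if_neg hij, neg_div]
    exact tendsto_neg_atTop_atBot.comp (hdiag.atTop_div_const hC)
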